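/- There exists an open dense set U ⊆ ω^ω × ω^ω such that for every Miller tree T ⊆ ω^{<ω}, the set [T] × [T] is not contained in U ∪ Δ, where Δ = {(x,x) : x ∈ ω^ω}. -/

import Mathlib

/-!
Let `U` be the set of pairs `(x, y)` with initial segments `x ↾ m`, `y ↾ n` that are
incomparable and cross-bounded: the values of `x ↾ m` are `< n` and those of `y ↾ n` are `< m`.
This condition only involves finitely many coordinates, so `U` is open, and any basic open set
of the plane contains such a pair, so `U` is dense.

In a Miller tree `T`, build two branches `x ≠ y` by extending them in alternation through
infinitely splitting nodes, each time by a successor `v k` larger than everything built so far,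
in particular than the length of the other approximation. If `x ↾ m`, `y ↾ n` were
cross-bounded, the first value of `y` after the common stem would be `< m`, so the next splitting
position of `x` is `< m`, so the value of `x` there is `< n`, so the next splitting position of
`y` is `< n`, and so on: all the values `v k` of `y` would be `< m`, although they increase.
-/

open Set

/-- `T` is a tree on `ℕ`: a set of finite sequences closed under initial segments. -/
def IsTree (T : Set (List ℕ)) : Prop := ∀ σ ∈ T, ∀ n : ℕ, σ.take n ∈ T

/-- The body of a tree: all infinite sequences all of whose initial segments lie in `T`. -/
def body (T : Set (List ℕ)) : Set (ℕ → ℕ) :=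
  {x | ∀ n : ℕ, List.ofFn (fun i : Fin n => x i) ∈ T}

/-- `T` is a Miller tree: a nonempty tree in which every node has an extension
with infinitely many immediate successors. -/
def IsMillerTree (T : Set (List ℕ)) : Prop :=
  T.Nonempty ∧ IsTree T ∧
    ∀ σ ∈ T, ∃ τ ∈ T, σ <+: τ ∧ {a : ℕ | τ ++ [a] ∈ T}.Infinite

/-- The diagonal of the square of Baire space. -/
def diag : Set ((ℕ → ℕ) × (ℕ → ℕ)) := {p | p.1 = p.2}

open PiNat TopologicalSpace

def CrossBounded (m n : ℕ) (x y : ℕ → ℕ) : Prop :=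
  (∃ i < min m n, x i ≠ y i) ∧ (∀ i < m, x i < n) ∧ (∀ j < n, y j < m)

def crossBoundedPairs : Set ((ℕ → ℕ) × (ℕ → ℕ)) := {q | ∃ m n, CrossBounded m n q.1 q.2}

lemma CrossBounded.of_mem_cylinder {m n : ℕ} {x y x' y' : ℕ → ℕ} (h : CrossBounded m n x y)
    (hx : x' ∈ cylinder x m) (hy : y' ∈ cylinder y n) : CrossBounded m n x' y' := by
  rw [mem_cylinder_iff] at hx hy
  obtain ⟨⟨i, hi, hne⟩, hxn, hym⟩ := h
  obtain ⟨him, hin⟩ := lt_min_iff.1 hi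
  exact ⟨⟨i, hi, by rwa [hx i him, hy i hin]⟩, fun i hi => hx i hi ▸ hxn i hi,
    fun j hj => hy j hj ▸ hym j hj⟩

lemma isOpen_crossBoundedPairs : IsOpen crossBoundedPairs := by
  refine isOpen_iff_mem_nhds.2 fun ⟨x, y⟩ ⟨m, n, h⟩ => Filter.mem_of_superset
    (prod_mem_nhds ((isOpen_cylinder _ x m).mem_nhds (self_mem_cylinder x m))
      ((isOpen_cylinder _ y n).mem_nhds (self_mem_cylinder y n))) ?_
  rintro ⟨x', y'⟩ ⟨hx, hy⟩
  exact ⟨m, n, h.of_mem_cylinder hx hy⟩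

lemma exists_crossBounded_mem_cylinder (x y : ℕ → ℕ) (m n : ℕ) :
    ∃ x' ∈ cylinder x m, ∃ y' ∈ cylinder y n, (x', y') ∈ crossBoundedPairs := by
  set L := max m n + (∑ i ∈ Finset.range m, x i + ∑ j ∈ Finset.range n, y j) + 2
  have hxL : ∀ i < m, x i < L := fun i hi => by
    have := Finset.single_le_sum (f := x) (fun _ _ => Nat.zero_le _) (Finset.mem_range.2 hi)
    omega
  have hyL : ∀ j < n, y j < L := fun j hj => by
    have := Finset.single_le_sum (f := y) (fun _ _ => Nat.zero_le _) (Finset.mem_range.2 hj)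
    omega
  refine ⟨fun i => if i < m then x i else 0, mem_cylinder_iff.2 fun i hi => if_pos hi,
    fun j => if j < n then y j else 1, mem_cylinder_iff.2 fun j hj => if_pos hj,
    L, L, ⟨max m n, by omega, ?_⟩, fun i hi => ?_, fun j hj => ?_⟩
  · simp
  · dsimp only
    split_ifs with h
    exacts [hxL i h, by omega]
  · dsimp only
    split_ifs with h
    exacts [hyL j h, by omega]

lemma dense_crossBoundedPairs : Dense crossBoundedPairs := by
  refine ((isTopologicalBasis_cylinders _).prod (isTopologicalBasis_cylinders _)).dense_iff.2 ?_
  rintro _ ⟨_, ⟨x, m, rfl⟩, _, ⟨y, n, rfl⟩, rfl⟩ -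
  obtain ⟨x', hx', y', hy', h⟩ := exists_crossBounded_mem_cylinder x y m n
  exact ⟨(x', y'), ⟨hx', hy'⟩, h⟩

/-- Step `k` of an alternating construction of `x` (even `k`) and `y` (odd `k`) puts the value
`v k` at position `p k`, and `v k` exceeds the position `p (k + 1)` used by the next step. -/
lemma notMem_crossBoundedPairs_union_diag_of_alternating {x y p v : ℕ → ℕ}
    (hx : ∀ k, x (p (2 * k)) = v (2 * k)) (hy : ∀ k, y (p (2 * k + 1)) = v (2 * k + 1))
    (hpv : ∀ k, p (k + 1) < v k) (hv : StrictMono v) (hp : p 0 = p 1)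
    (hxy : ∀ i < p 1, x i = y i) : (x, y) ∉ crossBoundedPairs ∪ diag := by
  rintro (⟨m, n, ⟨i, hi, hne⟩, hxn, hym⟩ | hdiag)
  · have hp1 : p 1 < n := lt_of_le_of_lt (not_lt.1 fun h => hne (hxy i h)) (lt_min_iff.1 hi).2
    -- The cross bounds propagate along the construction and bound every odd value by `m`.
    have hodd : ∀ k, p (2 * k + 1) < n := by
      intro k
      induction k with
      | zero => exact hp1
      | succ k ih =>
        have h1 : v (2 * k + 1) < m := hy k ▸ hym _ ih
        have h2 : v (2 * k + 2) < n := hx (k + 1) ▸ hxn _ ((hpv (2 * k + 1)).trans h1)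
        exact (hpv (2 * k + 2)).trans h2
    have hm : v (2 * m + 1) < m := hy m ▸ hym _ (hodd m)
    have := hv.le_apply (x := 2 * m + 1)
    omega
  · have h0 := hx 0
    have h1 := hy 0
    simp only [Nat.mul_zero, Nat.zero_add, hp] at h0 h1
    exact (hv zero_lt_one).ne (h0.symm.trans ((congrFun hdiag _).trans h1))

def IsInitialSegment (σ : List ℕ) (x : ℕ → ℕ) : Prop := ∀ i (hi : i < σ.length), σ[i] = x i

lemma IsInitialSegment.of_prefix {σ τ : List ℕ} {x : ℕ → ℕ} (h : IsInitialSegment τ x)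
    (hστ : σ <+: τ) : IsInitialSegment σ x :=
  fun i hi => (hστ.getElem hi).trans (h i _)

lemma IsInitialSegment.apply_length {σ : List ℕ} {a : ℕ} {x : ℕ → ℕ}
    (h : IsInitialSegment (σ ++ [a]) x) : x σ.length = a := by
  simpa using (h σ.length (by simp)).symm

lemma exists_isInitialSegment_of_chain (c : ℕ → List ℕ) (hc : ∀ k, c k <+: c (k + 1))
    (hlen : ∀ k, k ≤ (c k).length) : ∃ x, ∀ k, IsInitialSegment (c k) x := by
  have hmono : ∀ j k, j ≤ k → c j <+: c k := fun j k hjk =>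
    Nat.le_induction (List.prefix_refl _) (fun k _ ih => ih.trans (hc k)) k hjk
  refine ⟨fun i => (c (i + 1)).getD i 0, fun k i hi => ?_⟩
  have hi' : i < (c (i + 1)).length := lt_of_lt_of_le i.lt_succ_self (hlen _)
  show _ = (c (i + 1)).getD i 0
  rw [List.getD_eq_getElem _ _ hi']
  rcases le_total k (i + 1) with h | h
  · exact (hmono _ _ h).getElem hi
  · exact ((hmono _ _ h).getElem hi').symm

lemma mem_body_of_chain {T : Set (List ℕ)} (hT : IsTree T) {x : ℕ → ℕ} (c : ℕ → List ℕ)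
    (hcT : ∀ k, c k ∈ T) (hlen : ∀ k, k ≤ (c k).length) (hx : ∀ k, IsInitialSegment (c k) x) :
    x ∈ body T := by
  intro n
  have h : List.ofFn (fun i : Fin n => x i) = (c n).take n :=
    List.ext_getElem (by simpa using hlen n) fun i h₁ _ => by
      simp only [List.getElem_ofFn, List.getElem_take]
      exact (hx n i _).symm
  exact h ▸ hT _ (hcT n) n

/-- The even and the odd terms approximate two branches that are built in alternation. -/
def IsInterleaving (f : ℕ → List ℕ) : Prop :=
  f 0 = f 1 ∧
    ∀ n, ∃ a, (f (n + 1)).length < a ∧ (∀ b ∈ f (n + 1), b < a) ∧ f n ++ [a] <+: f (n + 2)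

namespace IsInterleaving

variable {f : ℕ → List ℕ}

lemma prefix_add_two (hf : IsInterleaving f) (n : ℕ) : f n <+: f (n + 2) :=
  let ⟨_, _, _, h⟩ := hf.2 n
  (List.prefix_append _ _).trans h

lemma le_length (hf : IsInterleaving f) (r k : ℕ) : k ≤ (f (2 * k + r)).length := by
  induction k with
  | zero => exact Nat.zero_le _
  | succ k ih =>
    obtain ⟨a, -, -, h⟩ := hf.2 (2 * k + r)
    have := h.length_le
    rw [show 2 * (k + 1) + r = 2 * k + r + 2 by ring]
    simp only [List.length_append, List.length_singleton] at this
    omega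

lemma exists_branch (hf : IsInterleaving f) (r : ℕ) :
    ∃ x, ∀ k, IsInitialSegment (f (2 * k + r)) x :=
  exists_isInitialSegment_of_chain _
    (fun k => by rw [show 2 * (k + 1) + r = 2 * k + r + 2 by ring]; exact hf.prefix_add_two _)
    (hf.le_length r)

lemma notMem_crossBoundedPairs_union_diag (hf : IsInterleaving f) {x y : ℕ → ℕ}
    (hx : ∀ k, IsInitialSegment (f (2 * k)) x) (hy : ∀ k, IsInitialSegment (f (2 * k + 1)) y) :
    (x, y) ∉ crossBoundedPairs ∪ diag := by
  obtain ⟨h01, hstep⟩ := hf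
  choose v hvlen hvmem hpre using hstep
  have hy0 : IsInitialSegment (f 0) y := h01 ▸ hy 0
  refine notMem_crossBoundedPairs_union_diag_of_alternating (p := fun k => (f k).length) (v := v)
    (fun k => ((hx (k + 1)).of_prefix (hpre (2 * k))).apply_length)
    (fun k => ((hy (k + 1)).of_prefix (hpre (2 * k + 1))).apply_length) hvlen
    (strictMono_nat_of_lt_succ fun n => hvmem (n + 1) (v n) ((hpre n).subset (by simp)))
    (congrArg List.length h01) fun i hi => ?_
  rw [← h01] at hi
  exact (hx 0 i hi).symm.trans (hy0 i hi)

end IsInterleaving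

/-- `length + sum` bounds the length and every entry of the previous term. -/
def interleave (ext : List ℕ → ℕ → List ℕ) (σ : List ℕ) : ℕ → List ℕ
  | 0 => σ
  | 1 => σ
  | n + 2 => ext (interleave ext σ n)
      ((interleave ext σ (n + 1)).length + (interleave ext σ (n + 1)).sum)

lemma exists_isInterleaving_of_extension (P : List ℕ → Prop) {σ : List ℕ} (hσ : P σ)
    (hext : ∀ τ, P τ → ∀ h, ∃ a τ', h < a ∧ τ ++ [a] <+: τ' ∧ P τ') :
    ∃ f, IsInterleaving f ∧ ∀ n, P (f n) := by
  choose! a ext ha hpre hP using hext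
  have hPf : ∀ n, P (interleave ext σ n) ∧ P (interleave ext σ (n + 1)) := by
    intro n
    induction n with
    | zero => exact ⟨hσ, hσ⟩
    | succ n ih => exact ⟨ih.2, hP _ ih.1 _⟩
  refine ⟨interleave ext σ, ⟨rfl, fun n => ⟨_, ?_, fun b hb => ?_, hpre _ (hPf n).1 _⟩⟩,
    fun n => (hPf n).1⟩
  · exact (Nat.le_add_right _ _).trans_lt (ha _ (hPf n).1 _)
  · exact ((List.le_sum_of_mem hb).trans (Nat.le_add_left _ _)).trans_lt (ha _ (hPf n).1 _)

def IsInfSplitNode (T : Set (List ℕ)) (σ : List ℕ) : Prop :=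
  σ ∈ T ∧ {a : ℕ | σ ++ [a] ∈ T}.Infinite

namespace IsMillerTree

variable {T : Set (List ℕ)}

lemma exists_isInfSplitNode_extension (hT : IsMillerTree T) {τ : List ℕ}
    (hτ : IsInfSplitNode T τ) (h : ℕ) :
    ∃ a τ', h < a ∧ τ ++ [a] <+: τ' ∧ IsInfSplitNode T τ' := by
  obtain ⟨a, haT, ha⟩ := hτ.2.exists_gt h
  obtain ⟨τ', hτ'T, hpre, hinf⟩ := hT.2.2 _ haT
  exact ⟨a, τ', ha, hpre, hτ'T, hinf⟩

lemma exists_isInterleaving (hT : IsMillerTree T) : ∃ f, IsInterleaving f ∧ ∀ n, f n ∈ T := by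
  obtain ⟨ρ, hρ⟩ := hT.1
  obtain ⟨σ, hσT, -, hσ⟩ := hT.2.2 ρ hρ
  obtain ⟨f, hf, hfT⟩ := exists_isInterleaving_of_extension (IsInfSplitNode T) ⟨hσT, hσ⟩
    fun τ hτ => hT.exists_isInfSplitNode_extension hτ
  exact ⟨f, hf, fun n => (hfT n).1⟩

end IsMillerTree

theorem openDense_omitting_miller_squares :
    ∃ U : Set ((ℕ → ℕ) × (ℕ → ℕ)), IsOpen U ∧ Dense U ∧
      ∀ T : Set (List ℕ), IsMillerTree T → ¬ (body T ×ˢ body T ⊆ U ∪ diag) := by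
  refine ⟨crossBoundedPairs, isOpen_crossBoundedPairs, dense_crossBoundedPairs,
    fun T hT hsub => ?_⟩
  obtain ⟨f, hf, hfT⟩ := hT.exists_isInterleaving
  obtain ⟨x, hx⟩ := hf.exists_branch 0
  obtain ⟨y, hy⟩ := hf.exists_branch 1
  have hxT : x ∈ body T := mem_body_of_chain hT.2.1 _ (fun _ => hfT _) (hf.le_length 0) hx
  have hyT : y ∈ body T := mem_body_of_chain hT.2.1 _ (fun _ => hfT _) (hf.le_length 1) hy
  exact hf.notMem_crossBoundedPairs_union_diag hx hy (hsub ⟨hxT, hyT⟩)
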